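/- Corollary (all deformation measures reduce to C and its gradients): for every natural number n ≥ 2 there exists a function L_n, defined on tuples consisting of a 3×3 matrix together with the values of the iterated derivatives of order 1 through n−2 of a 3×3-matrix-valued map on ℝ³, with values in arrays indexed by (α₁,…,α_n) ∈ {1,2,3}^n, such that for EVERY C^∞ map χ : ℝ³ → ℝ³ whose Jacobian F is invertible at every point and every X ∈ ℝ³, the n-th partial derivative of ρ² in its first argument evaluated on the diagonal satisfies ∂ⁿρ²(X̄,X)/∂X̄^{α₁}⋯∂X̄^{α_n} |_{X̄=X} = L_n( C(X), (∇C)(X), …, (∇^{n−2}C)(X) )_{α₁⋯α_n}; in particular these diagonal Taylor coefficients of ρ² depend on χ only through C and its derivatives up to order n−2 at X. -/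

import Mathlib

open ContDiff

/-- Partial derivative of a scalar field on ℝ³ in the coordinate direction `α`. -/
noncomputable def pd (f : (Fin 3 → ℝ) → ℝ) (α : Fin 3) : (Fin 3 → ℝ) → ℝ :=
  fun X => fderiv ℝ f X (Pi.single α 1)

/-- Right Cauchy–Green tensor component C_{αβ} of the placement χ, as a function of X. -/
noncomputable def CG (χ : (Fin 3 → ℝ) → (Fin 3 → ℝ)) (α β : Fin 3) : (Fin 3 → ℝ) → ℝ :=
  fun X => ∑ i, pd (fun Y => χ Y i) α X * pd (fun Y => χ Y i) β X

/-- The deformation gradient F(X), with entries F^i_α = ∂χ^i/∂X^α, as a matrix. -/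
noncomputable def Fgrad (χ : (Fin 3 → ℝ) → (Fin 3 → ℝ)) (X : Fin 3 → ℝ) :
    Matrix (Fin 3) (Fin 3) ℝ :=
  Matrix.of fun i α => pd (fun Y => χ Y i) α X

/-- The Cauchy–Green tensor as a map to `Fin 3 → Fin 3 → ℝ`. -/
noncomputable def CGfun (χ : (Fin 3 → ℝ) → (Fin 3 → ℝ)) :
    (Fin 3 → ℝ) → (Fin 3 → Fin 3 → ℝ) :=
  fun X α β => CG χ α β X

lemma pd_contDiff {f : (Fin 3 → ℝ) → ℝ} (hf : ContDiff ℝ ∞ f) (α : Fin 3) :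
    ContDiff ℝ ∞ (pd f α) := by
  have h1 : ContDiff ℝ ∞ (fderiv ℝ f) := hf.fderiv_right (by simp)
  exact (ContinuousLinearMap.apply ℝ ℝ (Pi.single α 1)).contDiff.comp h1

lemma pd_add {f g : (Fin 3 → ℝ) → ℝ} (hf : ContDiff ℝ ∞ f) (hg : ContDiff ℝ ∞ g) (α : Fin 3) :
    pd (fun Y => f Y + g Y) α = fun Y => pd f α Y + pd g α Y := by
  funext X
  simp only [pd]
  rw [fderiv_fun_add (hf.differentiable (by simp) X) (hg.differentiable (by simp) X)]
  rfl

lemma pd_mul {f g : (Fin 3 → ℝ) → ℝ} (hf : ContDiff ℝ ∞ f) (hg : ContDiff ℝ ∞ g) (α : Fin 3) :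
    pd (fun Y => f Y * g Y) α = fun Y => pd f α Y * g Y + f Y * pd g α Y := by
  funext X
  simp only [pd]
  rw [fderiv_fun_mul (hf.differentiable (by simp) X) (hg.differentiable (by simp) X)]
  simp only [ContinuousLinearMap.add_apply, ContinuousLinearMap.smul_apply,
    ContinuousLinearMap.coe_smul', Pi.smul_apply, smul_eq_mul]
  ring

lemma pd_sub_const {f : (Fin 3 → ℝ) → ℝ} (c : ℝ) (α : Fin 3) :
    pd (fun Y => f Y - c) α = pd f α := by
  funext X; simp only [pd, fderiv_sub_const]

-- iterated partial derivative, innermost first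
noncomputable def Dp : List (Fin 3) → ((Fin 3 → ℝ) → ℝ) → ((Fin 3 → ℝ) → ℝ)
  | [], f => f
  | a :: s, f => Dp s (pd f a)

lemma Dp_contDiff {f : (Fin 3 → ℝ) → ℝ} (hf : ContDiff ℝ ∞ f) :
    ∀ s : List (Fin 3), ContDiff ℝ ∞ (Dp s f) := by
  intro s
  induction s generalizing f with
  | nil => exact hf
  | cons a s ih => exact ih (pd_contDiff hf a)

lemma Dp_add {f g : (Fin 3 → ℝ) → ℝ} (hf : ContDiff ℝ ∞ f) (hg : ContDiff ℝ ∞ g) :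
    ∀ s : List (Fin 3), Dp s (fun Y => f Y + g Y) = fun Y => Dp s f Y + Dp s g Y := by
  intro s
  induction s generalizing f g with
  | nil => rfl
  | cons a s ih =>
      show Dp s (pd (fun Y => f Y + g Y) a) = _
      rw [pd_add hf hg a, ih (pd_contDiff hf a) (pd_contDiff hg a)]
      rfl

lemma Dp_append {s : List (Fin 3)} {b : Fin 3} {f : (Fin 3 → ℝ) → ℝ} :
    Dp (s ++ [b]) f = pd (Dp s f) b := by
  induction s generalizing f with
  | nil => rfl
  | cons a s ih => exact ih

lemma Dp_sub_const {f : (Fin 3 → ℝ) → ℝ} (c : ℝ) :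
    ∀ (a : Fin 3) (s : List (Fin 3)), Dp (a :: s) (fun Y => f Y - c) = Dp (a :: s) f := by
  intro a s
  show Dp s (pd (fun Y => f Y - c) a) = Dp s (pd f a)
  rw [pd_sub_const]

def splits : List (Fin 3) → List (List (Fin 3) × List (Fin 3))
  | [] => [([], [])]
  | a :: s => (splits s).map (fun p => (a :: p.1, p.2)) ++ (splits s).map (fun p => (p.1, a :: p.2))

lemma Dp_leibniz {f g : (Fin 3 → ℝ) → ℝ} (hf : ContDiff ℝ ∞ f) (hg : ContDiff ℝ ∞ g)
    (s : List (Fin 3)) (X : Fin 3 → ℝ) :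
    Dp s (fun Y => f Y * g Y) X =
      ((splits s).map (fun p => Dp p.1 f X * Dp p.2 g X)).sum := by
  induction s generalizing f g with
  | nil => simp [splits, Dp]
  | cons a s ih =>
      have h1 : Dp (a :: s) (fun Y => f Y * g Y) X
          = Dp s (fun Y => pd f a Y * g Y) X + Dp s (fun Y => f Y * pd g a Y) X := by
        show Dp s (pd (fun Y => f Y * g Y) a) X = _
        rw [pd_mul hf hg a]
        have := Dp_add (f := fun Y => pd f a Y * g Y) (g := fun Y => f Y * pd g a Y)
          ((pd_contDiff hf a).mul hg) (hf.mul (pd_contDiff hg a)) s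
        rw [show (fun Y => pd f a Y * g Y + f Y * pd g a Y)
              = (fun Y => (fun Z => pd f a Z * g Z) Y + (fun Z => f Z * pd g a Z) Y) from rfl,
          this]
      rw [h1, ih (pd_contDiff hf a) hg, ih hf (pd_contDiff hg a)]
      simp only [splits, List.map_append, List.map_map, List.sum_append]
      rfl

def listFn : (ds : List (Fin 3)) → Fin ds.length → Fin 3
  | [] => Fin.elim0
  | a :: s => Fin.snoc (listFn s) a

lemma Dp_eq_iFD (ds : List (Fin 3)) {f : (Fin 3 → ℝ) → ℝ} (hf : ContDiff ℝ ∞ f) (X : Fin 3 → ℝ) :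
    Dp ds f X = iteratedFDeriv ℝ ds.length f X (fun k => Pi.single (listFn ds k) 1) := by
  induction ds generalizing f with
  | nil => simp [Dp, listFn]
  | cons a s ih =>
      have h1 : Dp (a :: s) f X = Dp s (pd f a) X := rfl
      rw [h1, ih (pd_contDiff hf a)]
      have hfd : ContDiff ℝ ∞ (fderiv ℝ f) := hf.fderiv_right (by simp)
      have h2 : pd f a = (ContinuousLinearMap.apply ℝ ℝ (Pi.single a 1)) ∘ (fderiv ℝ f) := rfl
      rw [h2, ContinuousLinearMap.iteratedFDeriv_comp_left _ hfd.contDiffAt (by exact_mod_cast le_top)]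
      have h3 := iteratedFDeriv_succ_apply_right (𝕜 := ℝ) (f := f) (x := X)
        (n := s.length) (Fin.snoc (fun k => Pi.single (listFn s k) 1) (Pi.single a 1))
      rw [Fin.init_snoc, Fin.snoc_last] at h3
      rw [ContinuousLinearMap.compContinuousMultilinearMap_coe]
      simp only [Function.comp_apply, ContinuousLinearMap.apply_apply]
      rw [← h3]
      congr 1
      funext k
      refine Fin.lastCases ?_ ?_ k
      · simp [listFn]
      · intro j; simp [listFn]

def dlist : (n : ℕ) → (Fin n → Fin 3) → List (Fin 3)
  | 0, _ => []
  | n + 1, αs => αs (Fin.last n) :: dlist n (fun k => αs k.castSucc)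

lemma dlist_length : ∀ (n : ℕ) (αs : Fin n → Fin 3), (dlist n αs).length = n := by
  intro n
  induction n with
  | zero => intro _; rfl
  | succ n ih => intro αs; simp [dlist, ih]

lemma iFD_eq_Dp : ∀ (n : ℕ) (αs : Fin n → Fin 3) (f : (Fin 3 → ℝ) → ℝ),
    ContDiff ℝ ∞ f → ∀ X : Fin 3 → ℝ,
    iteratedFDeriv ℝ n f X (fun k => Pi.single (αs k) 1) = Dp (dlist n αs) f X := by
  intro n
  induction n with
  | zero => intro αs f hf X; simp [Dp, dlist]
  | succ n ih =>
      intro αs f hf X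
      rw [iteratedFDeriv_succ_apply_right]
      have hfd : ContDiff ℝ ∞ (fderiv ℝ f) := hf.fderiv_right (by simp)
      have h2 : (fun y => fderiv ℝ f y) = fderiv ℝ f := rfl
      have h4 : iteratedFDeriv ℝ n (fderiv ℝ f) X
            (Fin.init fun k : Fin (n+1) => (Pi.single (αs k) 1 : Fin 3 → ℝ)) (Pi.single (αs (Fin.last n)) 1)
          = iteratedFDeriv ℝ n (pd f (αs (Fin.last n))) X
            (Fin.init fun k : Fin (n+1) => (Pi.single (αs k) 1 : Fin 3 → ℝ)) := by
        have h5 : pd f (αs (Fin.last n))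
            = (ContinuousLinearMap.apply ℝ ℝ (Pi.single (αs (Fin.last n)) 1)) ∘ (fderiv ℝ f) := rfl
        rw [h5, ContinuousLinearMap.iteratedFDeriv_comp_left _ hfd.contDiffAt (by exact_mod_cast le_top)]
        rfl
      rw [h2, h4]
      have h6 : (Fin.init fun k : Fin (n+1) => (Pi.single (αs k) 1 : Fin 3 → ℝ))
          = fun k : Fin n => (Pi.single (αs k.castSucc) 1 : Fin 3 → ℝ) := rfl
      rw [h6, ih _ _ (pd_contDiff hf _)]
      rfl

lemma comp_contDiff {χ : (Fin 3 → ℝ) → (Fin 3 → ℝ)} (hχ : ContDiff ℝ ∞ χ) (i : Fin 3) :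
    ContDiff ℝ ∞ (fun Y => χ Y i) := (contDiff_pi.mp hχ) i

lemma CG_contDiff {χ : (Fin 3 → ℝ) → (Fin 3 → ℝ)} (hχ : ContDiff ℝ ∞ χ) (α β : Fin 3) :
    ContDiff ℝ ∞ (CG χ α β) := by
  apply ContDiff.sum
  intro i _
  exact (pd_contDiff (comp_contDiff hχ i) α).mul (pd_contDiff (comp_contDiff hχ i) β)

lemma pd_comm {f : (Fin 3 → ℝ) → ℝ} (hf : ContDiff ℝ ∞ f) (μ b : Fin 3) (X : Fin 3 → ℝ) :
    pd (pd f μ) b X = pd (pd f b) μ X := by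
  have hd : ∀ y, HasFDerivAt f (fderiv ℝ f y) y :=
    fun y => (hf.differentiable (by simp) y).hasFDerivAt
  have hfd : ContDiff ℝ ∞ (fderiv ℝ f) := hf.fderiv_right (by simp)
  have hx : HasFDerivAt (fderiv ℝ f) (fderiv ℝ (fderiv ℝ f) X) X :=
    (hfd.differentiable (by simp) X).hasFDerivAt
  have sym := second_derivative_symmetric hd hx
  have key : ∀ μ b : Fin 3, pd (pd f μ) b X
      = fderiv ℝ (fderiv ℝ f) X (Pi.single b 1) (Pi.single μ 1) := by
    intro μ b
    show fderiv ℝ (fun Y => (fderiv ℝ f Y) (Pi.single μ 1)) X (Pi.single b 1) = _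
    rw [fderiv_clm_apply (hfd.differentiable (by simp) X) (differentiableAt_const _)]
    simp
  rw [key μ b, key b μ, sym]
section ExprSec

inductive Expr : Type
  | jet : List (Fin 3) → Fin 3 → Fin 3 → Expr
  | invDet : Expr
  | const : ℝ → Expr
  | add : Expr → Expr → Expr
  | mul : Expr → Expr → Expr

namespace Expr

def eorder : Expr → ℕ
  | jet ds _ _ => ds.length
  | invDet => 0
  | const _ => 0
  | add a b => max a.eorder b.eorder
  | mul a b => max a.eorder b.eorder

noncomputable def eval (χ : (Fin 3 → ℝ) → (Fin 3 → ℝ)) : Expr → (Fin 3 → ℝ) → ℝ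
  | jet ds α β => Dp ds (CG χ α β)
  | invDet => fun X => (Matrix.det (Matrix.of fun α β => CG χ α β X))⁻¹
  | const r => fun _ => r
  | add a b => fun X => eval χ a X + eval χ b X
  | mul a b => fun X => eval χ a X * eval χ b X

def noInv : Expr → Prop
  | jet _ _ _ => True
  | invDet => False
  | const _ => True
  | add a b => noInv a ∧ noInv b
  | mul a b => noInv a ∧ noInv b

/-- Expression for an entry of C. -/
def cE (i j : Fin 3) : Expr := jet [] i j

def esub (a b : Expr) : Expr := add a (mul (const (-1)) b)

/-- determinant of C as an expression, following `Matrix.det_fin_three`. -/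
def detE : Expr :=
  esub (add (add (esub (esub (mul (cE 0 0) (mul (cE 1 1) (cE 2 2)))
      (mul (cE 0 0) (mul (cE 1 2) (cE 2 1))))
      (mul (cE 0 1) (mul (cE 1 0) (cE 2 2))))
      (mul (cE 0 1) (mul (cE 1 2) (cE 2 0))))
      (mul (cE 0 2) (mul (cE 1 0) (cE 2 1))))
      (mul (cE 0 2) (mul (cE 1 1) (cE 2 0)))

lemma noInv_detE : noInv detE := by
  simp [detE, esub, noInv, cE]

lemma eorder_detE : eorder detE = 0 := rfl

def polyD (b : Fin 3) : Expr → Expr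
  | jet ds α β => jet (ds ++ [b]) α β
  | invDet => const 0
  | const _ => const 0
  | add a c => add (polyD b a) (polyD b c)
  | mul a c => add (mul (polyD b a) c) (mul a (polyD b c))

def Dexpr (b : Fin 3) : Expr → Expr
  | jet ds α β => jet (ds ++ [b]) α β
  | invDet => mul (const (-1)) (mul (polyD b detE) (mul invDet invDet))
  | const _ => const 0
  | add a c => add (Dexpr b a) (Dexpr b c)
  | mul a c => add (mul (Dexpr b a) c) (mul a (Dexpr b c))

lemma eorder_polyD (b : Fin 3) : ∀ e : Expr, eorder (polyD b e) ≤ eorder e + 1 := by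
  intro e
  induction e with
  | jet ds α β => simp [polyD, eorder]
  | invDet => simp [polyD, eorder]
  | const r => simp [polyD, eorder]
  | add a c iha ihc => simp only [polyD, eorder]; omega
  | mul a c iha ihc => simp only [polyD, eorder]; omega

lemma eorder_Dexpr (b : Fin 3) : ∀ e : Expr, eorder (Dexpr b e) ≤ eorder e + 1 := by
  intro e
  induction e with
  | jet ds α β => simp [Dexpr, eorder]
  | invDet =>
      simp [Dexpr, eorder, polyD, detE, esub, cE]
  | const r => simp [Dexpr, eorder]
  | add a c iha ihc => simp only [Dexpr, eorder]; omega
  | mul a c iha ihc => simp only [Dexpr, eorder]; omega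

section WithChi

variable {χ : (Fin 3 → ℝ) → (Fin 3 → ℝ)} (hχ : ContDiff ℝ ∞ χ)
variable (hdet : ∀ X, Matrix.det (Matrix.of fun α β => CG χ α β X) ≠ 0)

lemma eval_detE : eval χ detE = fun X => Matrix.det (Matrix.of fun α β => CG χ α β X) := by
  funext X
  rw [Matrix.det_fin_three]
  simp only [detE, esub, cE, eval, Dp, Matrix.of_apply]
  ring

include hχ in
lemma detCG_contDiff : ContDiff ℝ ∞ (fun X => Matrix.det (Matrix.of fun α β => CG χ α β X)) := by
  have : (fun X => Matrix.det (Matrix.of fun α β => CG χ α β X))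
      = fun X => CG χ 0 0 X * CG χ 1 1 X * CG χ 2 2 X - CG χ 0 0 X * CG χ 1 2 X * CG χ 2 1 X -
          CG χ 0 1 X * CG χ 1 0 X * CG χ 2 2 X + CG χ 0 1 X * CG χ 1 2 X * CG χ 2 0 X +
          CG χ 0 2 X * CG χ 1 0 X * CG χ 2 1 X - CG χ 0 2 X * CG χ 1 1 X * CG χ 2 0 X := by
    funext X; rw [Matrix.det_fin_three]; rfl
  rw [this]
  have h := CG_contDiff hχ
  exact ((((((h 0 0).mul (h 1 1)).mul (h 2 2)).sub (((h 0 0).mul (h 1 2)).mul (h 2 1))).sub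
    (((h 0 1).mul (h 1 0)).mul (h 2 2))).add (((h 0 1).mul (h 1 2)).mul (h 2 0))).add
    ((((h 0 2).mul (h 1 0)).mul (h 2 1))) |>.sub (((h 0 2).mul (h 1 1)).mul (h 2 0))

include hχ hdet in
lemma eval_contDiff : ∀ e : Expr, ContDiff ℝ ∞ (eval χ e) := by
  intro e
  induction e with
  | jet ds α β => exact Dp_contDiff (CG_contDiff hχ α β) ds
  | invDet => exact (detCG_contDiff hχ).inv hdet
  | const r => exact contDiff_const
  | add a c iha ihc => exact iha.add ihc
  | mul a c iha ihc => exact iha.mul ihc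

include hχ hdet in
lemma pd_eval_polyD : ∀ e : Expr, noInv e → ∀ b : Fin 3,
    pd (eval χ e) b = eval χ (polyD b e) := by
  intro e
  induction e with
  | jet ds α β => intro _ b; exact (Dp_append (s := ds) (b := b) (f := CG χ α β)).symm
  | invDet => intro h; exact absurd h not_false
  | const r => intro _ b; funext X; simp [eval, pd, polyD]
  | add a c iha ihc =>
      intro h b
      have := pd_add (eval_contDiff hχ hdet a) (eval_contDiff hχ hdet c) b
      show pd (fun Y => eval χ a Y + eval χ c Y) b = _
      rw [this, iha h.1 b, ihc h.2 b]
      rfl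
  | mul a c iha ihc =>
      intro h b
      have := pd_mul (eval_contDiff hχ hdet a) (eval_contDiff hχ hdet c) b
      show pd (fun Y => eval χ a Y * eval χ c Y) b = _
      rw [this, iha h.1 b, ihc h.2 b]
      rfl

include hχ hdet in
lemma pd_eval_Dexpr : ∀ (e : Expr) (b : Fin 3),
    pd (eval χ e) b = eval χ (Dexpr b e) := by
  intro e
  induction e with
  | jet ds α β => intro b; exact (Dp_append (s := ds) (b := b) (f := CG χ α β)).symm
  | invDet =>
      intro b
      have hg : ContDiff ℝ ∞ (fun X => Matrix.det (Matrix.of fun α β => CG χ α β X)) :=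
        detCG_contDiff hχ
      funext X
      show fderiv ℝ (fun Y => (Matrix.det (Matrix.of fun α β => CG χ α β Y))⁻¹) X (Pi.single b 1)
        = _
      have hcomp : (fun Y => (Matrix.det (Matrix.of fun α β => CG χ α β Y))⁻¹)
          = (fun x : ℝ => x⁻¹) ∘ (fun Y => Matrix.det (Matrix.of fun α β => CG χ α β Y)) := rfl
      rw [hcomp, fderiv_comp X (differentiableAt_inv (hdet X)) (hg.differentiable (by simp) X),
        fderiv_inv]
      have hpd : fderiv ℝ (fun X => Matrix.det (Matrix.of fun α β => CG χ α β X)) X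
            (Pi.single b 1) = eval χ (polyD b detE) X := by
        have h1 : pd (eval χ detE) b = eval χ (polyD b detE) :=
          pd_eval_polyD hχ hdet detE noInv_detE b
        have h2 := congrFun h1 X
        rw [eval_detE] at h2
        exact h2
      simp only [ContinuousLinearMap.coe_comp', Function.comp_apply,
        ContinuousLinearMap.smulRight_apply, ContinuousLinearMap.one_apply, smul_eq_mul,
          ContinuousLinearMap.toSpanSingleton_apply]
      rw [hpd]
      show _ = (-1) * (eval χ (polyD b detE) X *
        ((Matrix.det (Matrix.of fun α β => CG χ α β X))⁻¹ *
         (Matrix.det (Matrix.of fun α β => CG χ α β X))⁻¹))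
      rw [sq]
      field_simp
  | const r => intro b; funext X; simp [eval, pd, Dexpr]
  | add a c iha ihc =>
      intro b
      have := pd_add (eval_contDiff hχ hdet a) (eval_contDiff hχ hdet c) b
      show pd (fun Y => eval χ a Y + eval χ c Y) b = _
      rw [this, iha b, ihc b]
      rfl
  | mul a c iha ihc =>
      intro b
      have := pd_mul (eval_contDiff hχ hdet a) (eval_contDiff hχ hdet c) b
      show pd (fun Y => eval χ a Y * eval χ c Y) b = _
      rw [this, iha b, ihc b]
      rfl

end WithChi
end Expr
end ExprSec
open scoped Matrix

namespace Expr

/-- adjugate of the C matrix, as expressions (mirrors `Matrix.adjugate_fin_three`). -/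
noncomputable def adjCE : Fin 3 → Fin 3 → Expr :=
  Matrix.of
  !![esub (mul (cE 1 1) (cE 2 2)) (mul (cE 1 2) (cE 2 1)),
     add (mul (const (-1)) (mul (cE 0 1) (cE 2 2))) (mul (cE 0 2) (cE 2 1)),
     esub (mul (cE 0 1) (cE 1 2)) (mul (cE 0 2) (cE 1 1));
     add (mul (const (-1)) (mul (cE 1 0) (cE 2 2))) (mul (cE 1 2) (cE 2 0)),
     esub (mul (cE 0 0) (cE 2 2)) (mul (cE 0 2) (cE 2 0)),
     add (mul (const (-1)) (mul (cE 0 0) (cE 1 2))) (mul (cE 0 2) (cE 1 0));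
     esub (mul (cE 1 0) (cE 2 1)) (mul (cE 1 1) (cE 2 0)),
     add (mul (const (-1)) (mul (cE 0 0) (cE 2 1))) (mul (cE 0 1) (cE 2 0)),
     esub (mul (cE 0 0) (cE 1 1)) (mul (cE 0 1) (cE 1 0))]

noncomputable def CinvE (ν ρ : Fin 3) : Expr := mul invDet (adjCE ν ρ)

noncomputable def halfE (ρ μ b : Fin 3) : Expr :=
  mul (const (1/2)) (add (jet [b] ρ μ) (add (jet [μ] ρ b) (mul (const (-1)) (jet [ρ] μ b))))

noncomputable def ΓE (ν μ b : Fin 3) : Expr :=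
  add (mul (CinvE ν 0) (halfE 0 μ b))
    (add (mul (CinvE ν 1) (halfE 1 μ b)) (mul (CinvE ν 2) (halfE 2 μ b)))

lemma eorder_adjCE (ν ρ : Fin 3) : eorder (adjCE ν ρ) = 0 := by
  fin_cases ν <;> fin_cases ρ <;> rfl

lemma eorder_ΓE (ν μ b : Fin 3) : eorder (ΓE ν μ b) ≤ 1 := by
  have h := eorder_adjCE
  simp only [ΓE, CinvE, halfE, eorder, h]
  simp [eorder]

section WithChi2

variable {χ : (Fin 3 → ℝ) → (Fin 3 → ℝ)}

/-- Γ-quantity : ∑ᵢ ∂ρ χ i · ∂b ∂μ χ i -/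
noncomputable def g1 (χ : (Fin 3 → ℝ) → (Fin 3 → ℝ)) (ρ μ b : Fin 3) (X : Fin 3 → ℝ) : ℝ :=
  ∑ i, pd (fun Y => χ Y i) ρ X * pd (pd (fun Y => χ Y i) μ) b X

lemma pd_sum {f : Fin 3 → (Fin 3 → ℝ) → ℝ} (hf : ∀ i, ContDiff ℝ ∞ (f i)) (α : Fin 3) :
    pd (fun Y => ∑ i, f i Y) α = fun X => ∑ i, pd (f i) α X := by
  funext X
  simp only [pd]
  rw [fderiv_fun_sum (fun i _ => (hf i).differentiable (by simp) X)]
  simp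

lemma pd_CG (hχ : ContDiff ℝ ∞ χ) (ρ μ b : Fin 3) (X : Fin 3 → ℝ) :
    pd (CG χ ρ μ) b X = g1 χ μ ρ b X + g1 χ ρ μ b X := by
  have hχi := comp_contDiff hχ
  have h1 : pd (CG χ ρ μ) b
      = fun X => ∑ i, pd (fun Y => pd (fun Z => χ Z i) ρ Y * pd (fun Z => χ Z i) μ Y) b X :=
    pd_sum (fun i => (pd_contDiff (hχi i) ρ).mul (pd_contDiff (hχi i) μ)) b
  rw [h1]
  have h2 : ∀ i : Fin 3,
      pd (fun Y => pd (fun Z => χ Z i) ρ Y * pd (fun Z => χ Z i) μ Y) b X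
      = pd (pd (fun Z => χ Z i) ρ) b X * pd (fun Z => χ Z i) μ X
        + pd (fun Z => χ Z i) ρ X * pd (pd (fun Z => χ Z i) μ) b X := by
    intro i
    rw [pd_mul (pd_contDiff (hχi i) ρ) (pd_contDiff (hχi i) μ) b]
  simp only [h2, g1, Finset.sum_add_distrib]
  congr 1
  apply Finset.sum_congr rfl
  intro i _
  ring

lemma g1_symm (hχ : ContDiff ℝ ∞ χ) (ρ μ b : Fin 3) (X : Fin 3 → ℝ) :
    g1 χ ρ μ b X = g1 χ ρ b μ X := by
  unfold g1
  apply Finset.sum_congr rfl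
  intro i _
  rw [pd_comm (comp_contDiff hχ i) μ b X]

lemma eval_halfE (hχ : ContDiff ℝ ∞ χ) (ρ μ b : Fin 3) (X : Fin 3 → ℝ) :
    eval χ (halfE ρ μ b) X = g1 χ ρ μ b X := by
  have e1 : eval χ (halfE ρ μ b) X
      = (1/2) * (pd (CG χ ρ μ) b X + (pd (CG χ ρ b) μ X + (-1) * pd (CG χ μ b) ρ X)) := rfl
  rw [e1, pd_CG hχ ρ μ b X, pd_CG hχ ρ b μ X, pd_CG hχ μ b ρ X,
    g1_symm hχ ρ b μ X, g1_symm hχ b ρ μ X, g1_symm hχ μ ρ b X]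
  ring

lemma Cm_eq (X : Fin 3 → ℝ) :
    (Matrix.of fun α β => CG χ α β X) = (Fgrad χ X)ᵀ * Fgrad χ X := by
  ext α β
  simp [Matrix.mul_apply, CG, Fgrad, Matrix.transpose_apply]

lemma det_ne (hF : ∀ X, IsUnit (Fgrad χ X)) (X : Fin 3 → ℝ) :
    Matrix.det (Matrix.of fun α β => CG χ α β X) ≠ 0 := by
  rw [Cm_eq, Matrix.det_mul, Matrix.det_transpose]
  have := ((Matrix.isUnit_iff_isUnit_det _).mp (hF X)).ne_zero
  exact mul_ne_zero this this

lemma eval_CinvE (hχ : ContDiff ℝ ∞ χ) (hF : ∀ X, IsUnit (Fgrad χ X)) (ν ρ : Fin 3)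
    (X : Fin 3 → ℝ) :
    eval χ (CinvE ν ρ) X = (Matrix.of fun α β => CG χ α β X)⁻¹ ν ρ := by
  set A := (Matrix.of fun α β => CG χ α β X) with hA
  have hadj : eval χ (adjCE ν ρ) X = Matrix.adjugate A ν ρ := by
    have hAe : ∀ i j : Fin 3, A i j = CG χ i j X := fun i j => rfl
    rw [Matrix.adjugate_fin_three]
    fin_cases ν <;> fin_cases ρ <;> (simp only [adjCE]; erw [Matrix.of_apply]; simp [eval, esub, cE, Dp, hAe]; try ring)
  have h1 : eval χ (CinvE ν ρ) X = A.det⁻¹ * eval χ (adjCE ν ρ) X := rfl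
  rw [h1, hadj, Matrix.inv_def, Ring.inverse_eq_inv', Matrix.smul_apply, smul_eq_mul]

/-- The second partial derivatives of χ in terms of F and the Christoffel expressions. -/
lemma second_deriv (hχ : ContDiff ℝ ∞ χ) (hF : ∀ X, IsUnit (Fgrad χ X)) (μ b : Fin 3)
    (X : Fin 3 → ℝ) (i : Fin 3) :
    pd (pd (fun Y => χ Y i) μ) b X = ∑ ν, Fgrad χ X i ν * eval χ (ΓE ν μ b) X := by
  set Fm := Fgrad χ X with hFm
  set Cm := (Matrix.of fun α β => CG χ α β X) with hCm
  set w : Fin 3 → ℝ := fun j => pd (pd (fun Y => χ Y j) μ) b X with hw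
  have hγ : ∀ ρ : Fin 3, g1 χ ρ μ b X = Fmᵀ.mulVec w ρ := by
    intro ρ
    simp [g1, Matrix.mulVec, dotProduct, Matrix.transpose_apply, hFm, Fgrad, hw]
  have hΓ : ∀ ν : Fin 3, eval χ (ΓE ν μ b) X = Cm⁻¹.mulVec (Fmᵀ.mulVec w) ν := by
    intro ν
    have e1 : eval χ (ΓE ν μ b) X
        = eval χ (CinvE ν 0) X * eval χ (halfE 0 μ b) X
          + (eval χ (CinvE ν 1) X * eval χ (halfE 1 μ b) X
            + eval χ (CinvE ν 2) X * eval χ (halfE 2 μ b) X) := rfl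
    rw [e1]
    simp only [eval_CinvE hχ hF, eval_halfE hχ, hγ]
    simp only [Matrix.mulVec, dotProduct, Fin.sum_univ_three, ← hCm]
    ring
  have hunit : IsUnit Fm.det := (Matrix.isUnit_iff_isUnit_det _).mp (hF X)
  have hunitT : IsUnit Fmᵀ.det := by rwa [Matrix.det_transpose]
  have hmat : Fm * (Cm⁻¹ * Fmᵀ) = 1 := by
    rw [hCm, Cm_eq, Matrix.mul_inv_rev, ← hFm]
    have h9 : Fm⁻¹ * (Fmᵀ)⁻¹ * Fmᵀ = Fm⁻¹ := by
      rw [Matrix.mul_assoc, Matrix.nonsing_inv_mul _ hunitT, Matrix.mul_one]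
    rw [h9, Matrix.mul_nonsing_inv _ hunit]
  have hfinal : Fm.mulVec (Cm⁻¹.mulVec (Fmᵀ.mulVec w)) = w := by
    rw [Matrix.mulVec_mulVec, Matrix.mulVec_mulVec, Matrix.mul_assoc, hmat, Matrix.one_mulVec]
  calc pd (pd (fun Y => χ Y i) μ) b X = w i := rfl
    _ = Fm.mulVec (Cm⁻¹.mulVec (Fmᵀ.mulVec w)) i := by rw [hfinal]
    _ = ∑ ν, Fm i ν * eval χ (ΓE ν μ b) X := by
        rw [Matrix.mulVec, dotProduct]
        exact Finset.sum_congr rfl fun ν _ => by rw [hΓ ν]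

end WithChi2
end Expr
namespace Expr

/-- three-fold sum of expressions -/
noncomputable def s3 (f : Fin 3 → Expr) : Expr := add (f 0) (add (f 1) (f 2))

lemma eorder_add (a b : Expr) : (add a b).eorder = max a.eorder b.eorder := rfl
lemma eorder_mul (a b : Expr) : (mul a b).eorder = max a.eorder b.eorder := rfl
lemma eorder_s3 (f : Fin 3 → Expr) :
    (s3 f).eorder = max (f 0).eorder (max (f 1).eorder (f 2).eorder) := rfl

/-- KEY: iterated partials of χ components are F-linear combinations with
universal C-expression coefficients. -/
lemma key : ∀ (s : List (Fin 3)), s ≠ [] → ∃ v : Fin 3 → Expr,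
    (∀ μ, (v μ).eorder + 1 ≤ s.length) ∧
    ∀ (χ : (Fin 3 → ℝ) → (Fin 3 → ℝ)), ContDiff ℝ ∞ χ → (∀ X, IsUnit (Fgrad χ X)) →
      ∀ (X : Fin 3 → ℝ) (i : Fin 3),
        Dp s (fun Y => χ Y i) X = ∑ μ, Fgrad χ X i μ * eval χ (v μ) X := by
  intro s
  induction s using List.reverseRecOn with
  | nil => intro h; exact absurd rfl h
  | append_singleton t b ih =>
    intro _
    rcases eq_or_ne t [] with rfl | ht
    · -- base case: single derivative
      refine ⟨fun μ => const (if μ = b then 1 else 0), by intro μ; simp [eorder], ?_⟩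
      intro χ hχ hF X i
      have h1 : Dp ([] ++ [b]) (fun Y => χ Y i) X = pd (fun Y => χ Y i) b X := rfl
      rw [h1]
      have h2 : ∀ μ : Fin 3, eval χ (const (if μ = b then 1 else 0)) X
          = (if μ = b then (1:ℝ) else 0) := fun μ => rfl
      simp only [h2, mul_ite, mul_one, mul_zero, Finset.sum_ite_eq', Finset.mem_univ, if_true]
      rfl
    · obtain ⟨v, hvord, hvspec⟩ := ih ht
      refine ⟨fun ν => add (s3 fun μ => mul (ΓE ν μ b) (v μ)) (Dexpr b (v ν)), ?_, ?_⟩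
      · intro ν
        have h0 := eorder_ΓE ν 0 b
        have h1 := eorder_ΓE ν 1 b
        have h2 := eorder_ΓE ν 2 b
        have hd := eorder_Dexpr b (v ν)
        have hv0 := hvord 0; have hv1 := hvord 1; have hv2 := hvord 2; have hvν := hvord ν
        have hlen : t.length ≥ 1 := by
          cases t with
          | nil => exact absurd rfl ht
          | cons a t => simp
        simp only [eorder_add, eorder_mul, eorder_s3, List.length_append, List.length_cons,
          List.length_nil]
        omega
      · intro χ hχ hF X i
        have hdet := det_ne (χ := χ) hF
        have hχi := comp_contDiff hχ i
        have hDt : Dp t (fun Y => χ Y i)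
            = fun Y => ∑ μ, pd (fun Z => χ Z i) μ Y * eval χ (v μ) Y := by
          funext Y
          exact hvspec χ hχ hF Y i
        rw [Dp_append, hDt]
        have hsum : pd (fun Y => ∑ μ, pd (fun Z => χ Z i) μ Y * eval χ (v μ) Y) b X
            = ∑ μ, pd (fun Y => pd (fun Z => χ Z i) μ Y * eval χ (v μ) Y) b X := by
          rw [pd_sum (fun μ => (pd_contDiff hχi μ).mul (eval_contDiff hχ hdet (v μ))) b]
        rw [hsum]
        have hterm : ∀ μ : Fin 3,
            pd (fun Y => pd (fun Z => χ Z i) μ Y * eval χ (v μ) Y) b X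
            = (∑ ν, Fgrad χ X i ν * eval χ (ΓE ν μ b) X) * eval χ (v μ) X
              + pd (fun Z => χ Z i) μ X * eval χ (Dexpr b (v μ)) X := by
          intro μ
          rw [pd_mul (pd_contDiff hχi μ) (eval_contDiff hχ hdet (v μ)) b,
            ← pd_eval_Dexpr hχ hdet (v μ) b, ← second_deriv hχ hF μ b X i]
        simp only [hterm]
        have hev : ∀ ν : Fin 3,
            eval χ (add (s3 fun μ => mul (ΓE ν μ b) (v μ)) (Dexpr b (v ν))) X
            = (eval χ (ΓE ν 0 b) X * eval χ (v 0) X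
              + (eval χ (ΓE ν 1 b) X * eval χ (v 1) X + eval χ (ΓE ν 2 b) X * eval χ (v 2) X))
              + eval χ (Dexpr b (v ν)) X := fun ν => rfl
        simp only [hev]
        have hFg : ∀ j μ : Fin 3, Fgrad χ X j μ = pd (fun Z => χ Z j) μ X := fun _ _ => rfl
        simp only [Fin.sum_univ_three, hFg]
        ring

noncomputable def keyV (s : List (Fin 3)) : Fin 3 → Expr :=
  if hs : s = [] then fun _ => Expr.const 0 else (key s hs).choose

lemma keyV_order (s : List (Fin 3)) (hs : s ≠ []) (μ : Fin 3) :
    (keyV s μ).eorder + 1 ≤ s.length := by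
  rw [keyV, dif_neg hs]
  exact (key s hs).choose_spec.1 μ

lemma keyV_spec (s : List (Fin 3)) (hs : s ≠ []) {χ : (Fin 3 → ℝ) → (Fin 3 → ℝ)}
    (hχ : ContDiff ℝ ∞ χ) (hF : ∀ X, IsUnit (Fgrad χ X)) (X : Fin 3 → ℝ) (i : Fin 3) :
    Dp s (fun Y => χ Y i) X = ∑ μ, Fgrad χ X i μ * eval χ (keyV s μ) X := by
  rw [keyV, dif_neg hs]
  exact (key s hs).choose_spec.2 χ hχ hF X i

/-- cross-term expression -/
noncomputable def pairE (u v : List (Fin 3)) : Expr :=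
  if u = [] ∨ v = [] then const 0
  else s3 fun μ => s3 fun ν => mul (keyV u μ) (mul (cE μ ν) (keyV v ν))

lemma eorder_pairE (u v : List (Fin 3)) (hu : u ≠ []) (hv : v ≠ []) :
    eorder (pairE u v) + 2 ≤ u.length + v.length := by
  rw [pairE, if_neg (by simp [hu, hv])]
  have h1 : ∀ μ, (keyV u μ).eorder + 1 ≤ u.length := keyV_order u hu
  have h2 : ∀ ν, (keyV v ν).eorder + 1 ≤ v.length := keyV_order v hv
  have h10 := h1 0; have h11 := h1 1; have h12 := h1 2
  have h20 := h2 0; have h21 := h2 1; have h22 := h2 2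
  have hul : 1 ≤ u.length := List.length_pos_iff.mpr hu
  have hvl : 1 ≤ v.length := List.length_pos_iff.mpr hv
  have hcE : ∀ μ ν : Fin 3, (cE μ ν).eorder = 0 := fun _ _ => rfl
  simp only [eorder_s3, eorder_mul, hcE]
  rw [← Nat.le_sub_iff_add_le (by omega)]
  simp only [max_le_iff, zero_le, true_and]
  and_intros <;> omega

lemma pair_eval {χ : (Fin 3 → ℝ) → (Fin 3 → ℝ)} (hχ : ContDiff ℝ ∞ χ)
    (hF : ∀ X, IsUnit (Fgrad χ X)) (u v : List (Fin 3)) (hu : u ≠ []) (hv : v ≠ [])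
    (X : Fin 3 → ℝ) :
    ∑ i, Dp u (fun Y => χ Y i) X * Dp v (fun Y => χ Y i) X = eval χ (pairE u v) X := by
  rw [pairE, if_neg (by simp [hu, hv])]
  have hU := fun i => keyV_spec u hu hχ hF X i
  have hV := fun i => keyV_spec v hv hχ hF X i
  simp only [hU, hV]
  have hC : ∀ μ ν : Fin 3, eval χ (cE μ ν) X
      = ∑ i, pd (fun Y => χ Y i) μ X * pd (fun Y => χ Y i) ν X := fun μ ν => rfl
  have hFg : ∀ j μ : Fin 3, Fgrad χ X j μ = pd (fun Z => χ Z j) μ X := fun _ _ => rfl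
  have hev : ∀ (f : Fin 3 → Fin 3 → Expr),
      eval χ (s3 fun μ => s3 fun ν => f μ ν) X
      = ∑ μ, ∑ ν, eval χ (f μ ν) X := by
    intro f
    simp only [s3, eval, Fin.sum_univ_three]
    ring
  rw [hev]
  have hevmul : ∀ (a b c : Expr), eval χ (mul a (mul b c)) X
      = eval χ a X * (eval χ b X * eval χ c X) := fun _ _ _ => rfl
  simp only [hevmul, hC, hFg, Fin.sum_univ_three]
  ring

end Expr
namespace Expr

noncomputable def sumListE : List Expr → Expr
  | [] => const 0
  | e :: l => add e (sumListE l)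

lemma eval_sumListE (χ : (Fin 3 → ℝ) → (Fin 3 → ℝ)) (X : Fin 3 → ℝ) :
    ∀ l : List Expr, eval χ (sumListE l) X = (l.map (fun e => eval χ e X)).sum := by
  intro l
  induction l with
  | nil => simp [sumListE, eval]
  | cons e l ih => simp [sumListE, eval, ih]

lemma eorder_sumListE (m : ℕ) : ∀ l : List Expr, (∀ e ∈ l, eorder e ≤ m) →
    eorder (sumListE l) ≤ m := by
  intro l
  induction l with
  | nil => intro _; simp [sumListE, eorder]
  | cons e l ih =>
      intro h
      have h1 := h e (by simp)
      have h2 := ih (fun e' he' => h e' (by simp [he']))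
      simp only [sumListE, eorder_add]
      omega

lemma splits_len : ∀ (ds : List (Fin 3)) (p : List (Fin 3) × List (Fin 3)),
    p ∈ splits ds → p.1.length + p.2.length = ds.length := by
  intro ds
  induction ds with
  | nil => intro p hp; simp [splits] at hp; simp [hp]
  | cons a s ih =>
      intro p hp
      simp only [splits, List.mem_append, List.mem_map] at hp
      rcases hp with ⟨q, hq, rfl⟩ | ⟨q, hq, rfl⟩ <;> have := ih q hq <;> simp <;> omega

/-- the total expression for the n-th diagonal derivative of ρ². -/
noncomputable def bigE (ds : List (Fin 3)) : Expr :=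
  sumListE ((splits ds).map fun p => pairE p.1 p.2)

end Expr

open Expr

/-- Evaluation of an expression from the abstract jet data. -/
noncomputable def evalData (n : ℕ) (c : Fin 3 → Fin 3 → ℝ)
    (jets : (k : Fin (n - 2)) →
      ContinuousMultilinearMap ℝ (fun _ : Fin (k.1 + 1) => (Fin 3 → ℝ)) (Fin 3 → Fin 3 → ℝ)) :
    Expr → ℝ
  | .jet [] α β => c α β
  | .jet (a :: s) α β =>
      if h : s.length < n - 2 then
        (jets ⟨s.length, h⟩ (fun j => Pi.single (listFn (a :: s) j) 1)) α β
      else 0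
  | .invDet => (Matrix.det (Matrix.of fun α β => c α β))⁻¹
  | .const r => r
  | .add a b => evalData n c jets a + evalData n c jets b
  | .mul a b => evalData n c jets a * evalData n c jets b

lemma CGfun_contDiff {χ : (Fin 3 → ℝ) → (Fin 3 → ℝ)} (hχ : ContDiff ℝ ∞ χ) :
    ContDiff ℝ ∞ (CGfun χ) :=
  contDiff_pi.mpr fun α => contDiff_pi.mpr fun β => CG_contDiff hχ α β

lemma Dp_CG_eq_iFD {χ : (Fin 3 → ℝ) → (Fin 3 → ℝ)} (hχ : ContDiff ℝ ∞ χ)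
    (ds : List (Fin 3)) (α β : Fin 3) (X : Fin 3 → ℝ) :
    Dp ds (CG χ α β) X
      = iteratedFDeriv ℝ ds.length (CGfun χ) X (fun k => Pi.single (listFn ds k) 1) α β := by
  have hπ : CG χ α β
      = ((ContinuousLinearMap.proj (R := ℝ) (φ := fun _ : Fin 3 => ℝ) β).comp
          (ContinuousLinearMap.proj (R := ℝ) (φ := fun _ : Fin 3 => Fin 3 → ℝ) α)) ∘ CGfun χ :=
    rfl
  rw [Dp_eq_iFD ds (by rw [hπ]; exact (ContinuousLinearMap.contDiff _).comp (CGfun_contDiff hχ)) X,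
    hπ, ContinuousLinearMap.iteratedFDeriv_comp_left _ (CGfun_contDiff hχ).contDiffAt
      (by exact_mod_cast le_top)]
  rfl

lemma evalData_eq (n : ℕ) {χ : (Fin 3 → ℝ) → (Fin 3 → ℝ)} (hχ : ContDiff ℝ ∞ χ)
    (X : Fin 3 → ℝ) :
    ∀ e : Expr, e.eorder ≤ n - 2 →
      evalData n (CGfun χ X) (fun k => iteratedFDeriv ℝ (k.1 + 1) (CGfun χ) X) e
        = eval χ e X := by
  intro e
  induction e with
  | jet ds α β =>
      intro hord
      cases ds with
      | nil => rfl
      | cons a s =>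
          have hlt : s.length < n - 2 := by
            simpa [Expr.eorder] using hord
          show dite _ _ _ = _
          rw [dif_pos hlt]
          exact (Dp_CG_eq_iFD hχ (a :: s) α β X).symm
  | invDet => intro _; rfl
  | const r => intro _; rfl
  | add a b iha ihb =>
      intro hord
      rw [Expr.eorder_add] at hord
      show evalData _ _ _ a + evalData _ _ _ b = _
      rw [iha (by omega), ihb (by omega)]
      rfl
  | mul a b iha ihb =>
      intro hord
      rw [Expr.eorder_mul] at hord
      show evalData _ _ _ a * evalData _ _ _ b = _
      rw [iha (by omega), ihb (by omega)]
      rfl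

lemma Dp_finsum {f : Fin 3 → (Fin 3 → ℝ) → ℝ} (hf : ∀ i, ContDiff ℝ ∞ (f i)) :
    ∀ s : List (Fin 3), Dp s (fun Y => ∑ i, f i Y) = fun X => ∑ i, Dp s (f i) X := by
  intro s
  induction s generalizing f with
  | nil => rfl
  | cons a s ih =>
      show Dp s (pd (fun Y => ∑ i, f i Y) a) = _
      rw [Expr.pd_sum hf a, ih (fun i => pd_contDiff (hf i) a)]
      rfl

lemma sum_mapsum (g : Fin 3 → List (Fin 3) × List (Fin 3) → ℝ) :
    ∀ l : List (List (Fin 3) × List (Fin 3)),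
      ∑ i, (l.map (g i)).sum = (l.map (fun p => ∑ i, g i p)).sum := by
  intro l
  induction l with
  | nil => simp
  | cons p l ih => simp [Finset.sum_add_distrib, ih]

/-- Corollary: all the diagonal Taylor coefficients of ρ² depend on χ only through C and
its derivatives up to order n−2: the n-th partial derivative of ρ² in its first argument,
evaluated at X̄ = X, is a universal function Lₙ of (C(X), ∇C(X), …, ∇ⁿ⁻²C(X)). -/
theorem piola_deformation_measures_reduce_to_C (n : ℕ) (hn : 2 ≤ n) :
    ∃ L : (Fin 3 → Fin 3 → ℝ) →
        ((k : Fin (n - 2)) →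
          ContinuousMultilinearMap ℝ (fun _ : Fin (k.1 + 1) => (Fin 3 → ℝ))
            (Fin 3 → Fin 3 → ℝ)) →
        (Fin n → Fin 3) → ℝ,
      ∀ χ : (Fin 3 → ℝ) → (Fin 3 → ℝ), ContDiff ℝ (⊤ : ℕ∞) χ →
        (∀ X, IsUnit (Fgrad χ X)) →
        ∀ (X : Fin 3 → ℝ) (αs : Fin n → Fin 3),
          iteratedFDeriv ℝ n (fun Y => ∑ i, (χ Y i - χ X i) ^ 2) X
              (fun k => Pi.single (αs k) 1)
            = L (CGfun χ X) (fun k => iteratedFDeriv ℝ (k.1 + 1) (CGfun χ) X) αs := by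
  refine ⟨fun c jets αs => evalData n c jets (bigE (dlist n αs)), ?_⟩
  intro χ hχtop hF X αs
  have hχ : ContDiff ℝ ∞ χ := hχtop.of_le (by simp)
  set ds := dlist n αs with hds
  have hdsl : ds.length = n := dlist_length n αs
  -- the function being differentiated
  set g : Fin 3 → (Fin 3 → ℝ) → ℝ := fun i Y => (χ Y i - χ X i) ^ 2 with hg
  have hgi : ∀ i, ContDiff ℝ ∞ (g i) :=
    fun i => ((comp_contDiff hχ i).sub contDiff_const).pow 2
  -- step 1 : bridge to Dp
  have h1 : iteratedFDeriv ℝ n (fun Y => ∑ i, (χ Y i - χ X i) ^ 2) X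
      (fun k => Pi.single (αs k) 1) = Dp ds (fun Y => ∑ i, g i Y) X :=
    iFD_eq_Dp n αs _ (ContDiff.sum fun i _ => hgi i) X
  rw [h1, Dp_finsum hgi ds]
  -- step 2 : Leibniz for each i
  have h2 : ∀ i : Fin 3, Dp ds (g i) X
      = ((splits ds).map (fun p =>
          Dp p.1 (fun Y => χ Y i - χ X i) X * Dp p.2 (fun Y => χ Y i - χ X i) X)).sum := by
    intro i
    have hsq : g i = fun Y => (χ Y i - χ X i) * (χ Y i - χ X i) := by
      funext Y; rw [hg]; ring
    rw [hsq]
    exact Dp_leibniz ((comp_contDiff hχ i).sub contDiff_const)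
      ((comp_contDiff hχ i).sub contDiff_const) ds X
  simp only [h2]
  rw [sum_mapsum]
  -- step 3 : each split gives the pairE evaluation
  have h3 : ∀ p ∈ splits ds,
      (∑ i, Dp p.1 (fun Y => χ Y i - χ X i) X * Dp p.2 (fun Y => χ Y i - χ X i) X)
        = eval χ (pairE p.1 p.2) X := by
    intro p _
    rcases eq_or_ne p.1 [] with h | hu
    · rw [pairE, if_pos (Or.inl h), h]
      have : ∀ i : Fin 3, Dp [] (fun Y => χ Y i - χ X i) X = 0 := by
        intro i; show χ X i - χ X i = 0; ring
      simp only [this, zero_mul, Finset.sum_const_zero]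
      rfl
    rcases eq_or_ne p.2 [] with h | hv
    · rw [pairE, if_pos (Or.inr h), h]
      have : ∀ i : Fin 3, Dp [] (fun Y => χ Y i - χ X i) X = 0 := by
        intro i; show χ X i - χ X i = 0; ring
      simp only [this, mul_zero, Finset.sum_const_zero]
      rfl
    · obtain ⟨a, u, hu'⟩ := List.exists_cons_of_ne_nil hu
      obtain ⟨b, v, hv'⟩ := List.exists_cons_of_ne_nil hv
      have hsub : ∀ (w : Fin 3) (t : List (Fin 3)) (i : Fin 3),
          Dp (w :: t) (fun Y => χ Y i - χ X i) X = Dp (w :: t) (fun Y => χ Y i) X := by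
        intro w t i
        rw [Dp_sub_const (χ X i) w t]
      rw [show p = (a :: u, b :: v) from Prod.ext hu' hv']
      simp only [hsub]
      exact pair_eval hχ hF (a :: u) (b :: v) (by simp) (by simp) X
  rw [List.map_congr_left h3]
  -- step 4 : pass to evalData
  have h4 : eval χ (bigE ds) X
      = ((splits ds).map (fun p => eval χ (pairE p.1 p.2) X)).sum := by
    rw [bigE, eval_sumListE, List.map_map]
    rfl
  rw [← h4]
  refine (evalData_eq n hχ X (bigE ds) ?_).symm
  -- order bound
  apply eorder_sumListE
  intro e he
  simp only [List.mem_map] at he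
  obtain ⟨p, hp, rfl⟩ := he
  rcases eq_or_ne p.1 [] with h | hu
  · rw [pairE, if_pos (Or.inl h)]; simp [Expr.eorder]
  rcases eq_or_ne p.2 [] with h | hv
  · rw [pairE, if_pos (Or.inr h)]; simp [Expr.eorder]
  · have hle := eorder_pairE p.1 p.2 hu hv
    have hlen := splits_len ds p hp
    have h1 : 1 ≤ p.1.length := List.length_pos_iff.mpr hu
    have h2 : 1 ≤ p.2.length := List.length_pos_iff.mpr hv
    omega
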